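/- (Hypergeometric representation for q(G) = G^l, continuous case.) Fix an integer l ≥ 1, set α_{d+1} = 0 and η = l^{d+1}ρ. Let P_n = Σ_{j=0}^n (G^l)^j(x^n)/j!. Then for every n ≥ 0, P_n(x) = Σ_{j=0}^{⌊n/l⌋} [(−1)^{lj(d+1)} η^{lj} ∏_{k=1}^{d+1} ∏_{r=0}^{l−1} ((−n−α_k+r)/l)_j / j!] · x^{n−lj}. -/
import Mathlib


open Polynomial

/-- Pochhammer symbol `(a)_j = a(a+1)⋯(a+j−1)`. -/
noncomputable def poch (a : ℂ) (j : ℕ) : ℂ := ∏ s ∈ Finset.range j, (a + s)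

/-- The derivative operator `∂` on `ℂ[x]`. -/
noncomputable def Dop : Module.End ℂ (Polynomial ℂ) := Polynomial.derivative

/-- Multiplication by `x` on `ℂ[x]`. -/
noncomputable def Xop : Module.End ℂ (Polynomial ℂ) := LinearMap.mulLeft ℂ Polynomial.X

/-- `H = x∂`. -/
noncomputable def Hop : Module.End ℂ (Polynomial ℂ) := Xop * Dop

/-- `G = R(H)∘∂` with `R(H) = ρ·∏_{k=1}^d (H + α_k + 1)`. -/
noncomputable def Gop (d : ℕ) (α : ℕ → ℂ) (ρ : ℂ) : Module.End ℂ (Polynomial ℂ) :=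
  (Polynomial.aeval Hop
    (Polynomial.C ρ * ∏ k ∈ Finset.range d, (Polynomial.X + Polynomial.C (α k + 1)))) * Dop

section Aux
open Finset

lemma hop_pow (t : ℕ) : Hop (X ^ t : Polynomial ℂ) = (t : ℂ) • X ^ t := by
  cases t with
  | zero => simp [Hop, Xop, Dop]
  | succ m =>
    simp [Hop, Xop, Dop, Module.End.mul_apply, derivative_X_pow, LinearMap.mulLeft_apply]
    rw [smul_eq_C_mul]
    simp only [map_add, map_one, Polynomial.C_eq_natCast]
    ring

lemma hop_pow_iter (m t : ℕ) : (Hop ^ m) (X ^ t : Polynomial ℂ) = ((t : ℂ) ^ m) • X ^ t := by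
  induction m with
  | zero => simp
  | succ m ih =>
    rw [pow_succ', Module.End.mul_apply, ih, map_smul, hop_pow, smul_smul, pow_succ]

lemma aeval_hop_pow (q : Polynomial ℂ) (t : ℕ) :
    (Polynomial.aeval Hop q) (X ^ t : Polynomial ℂ) = q.eval (t : ℂ) • X ^ t := by
  induction q using Polynomial.induction_on' with
  | add p q hp hq => simp [hp, hq, add_smul]
  | monomial m a =>
    simp [aeval_monomial, Module.End.mul_apply, hop_pow_iter, smul_smul,
      Algebra.algebraMap_eq_smul_one]

lemma gop_pow (d : ℕ) (α : ℕ → ℂ) (ρ : ℂ) (m : ℕ) :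
    Gop d α ρ (X ^ m : Polynomial ℂ) =
      (ρ * ∏ k ∈ range (d+1), ((m:ℂ) + (if k < d then α k else 0))) • X ^ (m-1) := by
  cases m with
  | zero =>
    rw [Finset.prod_eq_zero (Finset.self_mem_range_succ d)]
    · simp [Gop, Dop, Module.End.mul_apply]
    · simp
  | succ m =>
    have hD : Dop (X ^ (m+1) : Polynomial ℂ) = ((m:ℂ)+1) • X ^ m := by
      simp [Dop, derivative_X_pow, smul_eq_C_mul, map_add, map_one,
        Polynomial.C_eq_natCast]
    rw [Gop, Module.End.mul_apply, hD, map_smul, aeval_hop_pow, smul_smul]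
    congr 1
    have h2 : (∏ k ∈ range d, (((m+1:ℕ):ℂ) + if k < d then α k else 0))
        = ∏ k ∈ range d, ((m:ℂ) + (α k + 1)) := by
      refine Finset.prod_congr rfl fun k hk => ?_
      rw [if_pos (Finset.mem_range.mp hk)]
      push_cast; ring
    rw [Finset.prod_range_succ, h2, if_neg (lt_irrefl d)]
    simp only [eval_mul, eval_C, eval_prod, eval_add, eval_X]
    push_cast
    ring

lemma gop_iter (d : ℕ) (α : ℕ → ℂ) (ρ : ℂ) (n m : ℕ) :
    ((Gop d α ρ) ^ m) (X ^ n : Polynomial ℂ) =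
      (∏ i ∈ range m,
        (ρ * ∏ k ∈ range (d+1), (((n - i : ℕ):ℂ) + (if k < d then α k else 0)))) • X ^ (n-m) := by
  induction m with
  | zero => simp
  | succ m ih =>
    rw [pow_succ', Module.End.mul_apply, ih, map_smul, gop_pow, smul_smul, Nat.sub_sub]
    conv_rhs => rw [Finset.prod_range_succ]

lemma prod_shift (f : ℕ → ℂ) (l j : ℕ) :
    ∏ s ∈ range j, ∏ r ∈ range l, f (l * s + r) = ∏ i ∈ range (l * j), f i := by
  induction j with
  | zero => simp
  | succ j ih =>
    rw [Finset.prod_range_succ, ih, Nat.mul_succ, Finset.prod_range_add]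

lemma poch_prod (c : ℂ) (l j : ℕ) (hl : (l:ℂ) ≠ 0) :
    ∏ r ∈ range l, poch ((c + r) / l) j
      = ((l:ℂ) ^ (l * j))⁻¹ * ∏ i ∈ range (l * j), (c + i) := by
  have h1 : ∀ r : ℕ, poch ((c + r) / l) j
      = ((l:ℂ) ^ j)⁻¹ * ∏ s ∈ range j, (c + ((l * s + r : ℕ) : ℂ)) := by
    intro r
    have e : ∀ s ∈ range j, (c+(r:ℂ))/(l:ℂ) + (s:ℂ) = (c + ((l*s+r:ℕ):ℂ))/(l:ℂ) := by
      intro s _; push_cast; field_simp; ring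
    rw [poch, Finset.prod_congr rfl e, Finset.prod_div_distrib, Finset.prod_const,
      Finset.card_range, div_eq_inv_mul]
  calc ∏ r ∈ range l, poch ((c + r) / l) j
      = ∏ r ∈ range l, (((l:ℂ) ^ j)⁻¹ * ∏ s ∈ range j, (c + ((l * s + r : ℕ) : ℂ))) :=
        Finset.prod_congr rfl fun r _ => h1 r
    _ = (((l:ℂ) ^ j)⁻¹)^l * ∏ r ∈ range l, ∏ s ∈ range j, (c + ((l * s + r : ℕ) : ℂ)) := by
        rw [Finset.prod_mul_distrib, Finset.prod_const, Finset.card_range]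
    _ = ((l:ℂ) ^ (l*j))⁻¹ * ∏ s ∈ range j, ∏ r ∈ range l, (c + ((l * s + r : ℕ) : ℂ)) := by
        rw [Finset.prod_comm, ← inv_pow, ← pow_mul, mul_comm j l, inv_pow]
    _ = _ := by rw [prod_shift (fun i => c + (i:ℂ))]

lemma scalar_key (lc ρc : ℂ) (hlc : lc ≠ 0) (t m : ℕ) :
    (-1:ℂ)^t * (lc^t * ρc^m) * ((lc^t)⁻¹ * (-1:ℂ)^t) = ρc^m := by
  have a1 : (-1:ℂ)^t * (-1:ℂ)^t = 1 := by
    rw [← pow_add, ← two_mul, pow_mul]; norm_num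
  have a2 : lc^t * (lc^t)⁻¹ = 1 := mul_inv_cancel₀ (pow_ne_zero _ hlc)
  calc (-1:ℂ)^t * (lc^t * ρc^m) * ((lc^t)⁻¹ * (-1:ℂ)^t)
      = ((-1:ℂ)^t * (-1:ℂ)^t) * (lc^t * (lc^t)⁻¹) * ρc^m := by ring
    _ = ρc^m := by rw [a1, a2]; ring

lemma scalar_key' (a ρc P : ℂ) (ha : a ≠ 0) (t m : ℕ) :
    (-1:ℂ)^t * (a^t * ρc^m) * ((a^t)⁻¹ * (-1:ℂ)^t * P) = ρc^m * P := by
  have a1 : (-1:ℂ)^t * (-1:ℂ)^t = 1 := by rw [← pow_add, ← two_mul, pow_mul]; norm_num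
  have a2 : a^t * (a^t)⁻¹ = 1 := mul_inv_cancel₀ (pow_ne_zero _ ha)
  calc (-1:ℂ)^t * (a^t * ρc^m) * ((a^t)⁻¹ * (-1:ℂ)^t * P)
      = ((-1:ℂ)^t * (-1:ℂ)^t) * (a^t * (a^t)⁻¹) * (ρc^m * P) := by ring
    _ = ρc^m * P := by rw [a1, a2]; ring

lemma coef_eq (d : ℕ) (α : ℕ → ℂ) (ρ : ℂ) (l n j : ℕ) (hl : 1 ≤ l) (hj : l * j ≤ n) :
    (∏ i ∈ range (l * j),
        (ρ * ∏ k ∈ range (d+1), (((n - i : ℕ):ℂ) + (if k < d then α k else 0))))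
      = (-1:ℂ) ^ (l*j*(d+1)) * ((l:ℂ)^(d+1)*ρ)^(l*j)
          * ∏ k ∈ range (d+1), ∏ r ∈ range l,
              poch ((-(n:ℂ) - (if k < d then α k else 0) + r)/(l:ℂ)) j := by
  have hlc : (l:ℂ) ≠ 0 := Nat.cast_ne_zero.mpr (by omega)
  have hp : ∀ k, ∏ r ∈ range l,
        poch ((-(n:ℂ) - (if k < d then α k else 0) + r)/(l:ℂ)) j
      = (((l:ℂ) ^ (l*j))⁻¹ * (-1:ℂ)^(l*j)) *
          ∏ i ∈ range (l*j), (((n:ℂ) - i) + (if k < d then α k else 0)) := by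
    intro k
    rw [poch_prod _ _ _ hlc]
    have e : ∀ i ∈ range (l*j), (-(n:ℂ) - (if k < d then α k else 0) + i)
        = (-1) * (((n:ℂ) - i) + (if k < d then α k else 0)) := fun i _ => by ring
    rw [Finset.prod_congr rfl e, Finset.prod_mul_distrib, Finset.prod_const,
      Finset.card_range, mul_assoc]
  rw [Finset.prod_congr rfl (fun k _ => hp k), Finset.prod_mul_distrib,
    Finset.prod_const, Finset.card_range]
  have hcast : ∀ i ∈ range (l*j), ∀ k ∈ range (d+1),
      ((n - i : ℕ):ℂ) + (if k < d then α k else 0)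
        = ((n:ℂ) - i) + (if k < d then α k else 0) := by
    intro i hi k _
    rw [Nat.cast_sub (le_of_lt (lt_of_lt_of_le (Finset.mem_range.mp hi) hj))]
  calc ρ^(l*j) * ∏ i ∈ range (l * j),
        ∏ k ∈ range (d+1), (((n - i : ℕ):ℂ) + (if k < d then α k else 0))
      = ρ^(l*j) * ∏ i ∈ range (l*j), ∏ k ∈ range (d+1),
          (((n:ℂ) - i) + (if k < d then α k else 0)) := by
        congr 1
        exact Finset.prod_congr rfl fun i hi => Finset.prod_congr rfl (hcast i hi)
    _ = ρ^(l*j) * ∏ k ∈ range (d+1), ∏ i ∈ range (l*j),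
          (((n:ℂ) - i) + (if k < d then α k else 0)) := by rw [Finset.prod_comm]
    _ = _ := by
        conv_rhs => rw [Finset.prod_mul_distrib, Finset.prod_const, Finset.card_range]
        have h2 : ((l:ℂ)^(d+1)*ρ)^(l*j) = (l:ℂ)^(l*j*(d+1)) * ρ^(l*j) := by
          rw [mul_pow, ← pow_mul, mul_comm (d+1) (l*j)]
        have h3 : (((l:ℂ)^(l*j))⁻¹ * (-1:ℂ)^(l*j))^(d+1)
            = ((l:ℂ)^(l*j*(d+1)))⁻¹ * (-1:ℂ)^(l*j*(d+1)) := by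
          rw [mul_pow, ← inv_pow, ← pow_mul, inv_pow, ← pow_mul]
        rw [h2, h3]
        exact (scalar_key' _ _ _ hlc _ _).symm

end Aux

/-- Hypergeometric representation for `q(G) = G^l`, continuous case, with `α_{d+1} = 0`
and `η = l^{d+1}ρ`. -/
theorem stmt11 (d : ℕ) (α : ℕ → ℂ) (ρ : ℂ) (hρ : ρ ≠ 0) (l : ℕ) (hl : 1 ≤ l) (n : ℕ) :
    let G := Gop d α ρ
    let η : ℂ := (l : ℂ) ^ (d + 1) * ρ
    let A : ℕ → ℂ := fun k => if k < d then α k else 0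
    (∑ j ∈ Finset.range (n + 1),
        ((j.factorial : ℂ))⁻¹ • ((G ^ l) ^ j) (Polynomial.X ^ n))
      = ∑ j ∈ Finset.range (n / l + 1),
          (((-1 : ℂ) ^ (l * j * (d + 1)) * η ^ (l * j)
              * ∏ k ∈ Finset.range (d + 1), ∏ r ∈ Finset.range l,
                  poch ((-(n : ℂ) - A k + r) / (l : ℂ)) j) / (j.factorial : ℂ))
            • Polynomial.X ^ (n - l * j) := by
  intro G η A
  have hG : G = Gop d α ρ := rfl
  have hη : η = (l : ℂ) ^ (d + 1) * ρ := rfl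
  have hA : A = fun k => if k < d then α k else 0 := rfl
  have hl0 : 0 < l := hl
  have hsub : Finset.range (n / l + 1) ⊆ Finset.range (n + 1) :=
    Finset.range_subset_range.mpr (by have := Nat.div_le_self n l; omega)
  rw [hG, hη, hA]
  rw [← Finset.sum_subset hsub (fun j hj1 hj2 => ?_)]
  · refine Finset.sum_congr rfl fun j hj => ?_
    have hjn : l * j ≤ n := by
      have hj' : j ≤ n / l := by
        have := Finset.mem_range.mp hj; omega
      calc l * j ≤ l * (n / l) := Nat.mul_le_mul_left l hj'
        _ ≤ n := Nat.mul_div_le n l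
    rw [← pow_mul, gop_iter, smul_smul, coef_eq d α ρ l n j hl hjn,
      div_eq_mul_inv, mul_comm]
  · -- vanishing terms
    have hnj : n < l * j := by
      have h1 : ¬ j ≤ n / l := by
        intro h; exact hj2 (Finset.mem_range.mpr (by omega))
      have h2 : n / l < j := by omega
      calc n < j * l := (Nat.div_lt_iff_lt_mul hl0).mp h2
        _ = l * j := mul_comm j l
    rw [← pow_mul, gop_iter, Finset.prod_eq_zero (Finset.mem_range.mpr hnj)]
    · simp
    · rw [Finset.prod_eq_zero (Finset.self_mem_range_succ d)]
      · exact mul_zero ρ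
      · simp
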